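/- arXiv:1701.05532 — 2 statements merged into one kernel-verified Lean document; each statement's English description precedes it below -/
import Mathlib

section
/- For matrices, the γ₂ factorization norm of a vertical concatenation is bounded by the ℓ₂ combination of the parts: if a set system F over a ground set P is the union F = F₁ ∪ ... ∪ F_k of set systems F₁,...,F_k over P, then γ₂(F) ≤ sqrt(γ₂(F₁)² + ... + γ₂(F_k)²). -/
open scoped BigOperators

/-- Maximum ℓ₂ norm of a row of `U` (the `‖·‖_{2→∞}` norm). -/
noncomputable def rowMax {α : Type*} [Fintype α] {r : ℕ} (U : Matrix α (Fin r) ℝ) : ℝ :=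
  ⨆ i, Real.sqrt (∑ j, (U i j) ^ 2)

/-- Maximum ℓ₂ norm of a column of `V` (the `‖·‖_{1→2}` norm). -/
noncomputable def colMax {β : Type*} [Fintype β] {r : ℕ} (V : Matrix (Fin r) β ℝ) : ℝ :=
  ⨆ j, Real.sqrt (∑ i, (V i j) ^ 2)

/-- The γ₂ factorization norm of a real matrix. -/
noncomputable def gamma2 {α β : Type*} [Fintype α] [Fintype β] (A : Matrix α β ℝ) : ℝ :=
  sInf {t : ℝ | ∃ (r : ℕ) (U : Matrix α (Fin r) ℝ) (V : Matrix (Fin r) β ℝ),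
    A = U * V ∧ t = rowMax U * colMax V}

/-- The 0/1 incidence matrix of a set system: rows indexed by sets, columns by points. -/
noncomputable def incidenceMatrix {α : Type*} [Fintype α] [DecidableEq α]
    (F : Finset (Finset α)) : Matrix {S // S ∈ F} α ℝ :=
  Matrix.of fun S p => if p ∈ S.1 then (1 : ℝ) else 0

/-- γ₂ of a set system is γ₂ of its incidence matrix. -/
noncomputable def gamma2Sys {α : Type*} [Fintype α] [DecidableEq α]
    (F : Finset (Finset α)) : ℝ :=
  gamma2 (incidenceMatrix F)

/-!
If `Aᵢ = Uᵢ Vᵢ` where the rows of `Uᵢ` have norm at most `1` and the columns of `Vᵢ` norm at most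
`cᵢ`, then the vertical stack of the `Aᵢ` factors as `blockDiagonal' U` times the stack of the
`Vᵢ`; its rows still have norm at most `1` and its columns norm at most `√(∑ cᵢ²)`. Rescaling a
near-optimal factorization of `Aᵢ` makes any `cᵢ > γ₂(Aᵢ)` attainable. The incidence matrix of
`F = ⋃ Gᵢ` is a selection of rows of the stack of the incidence matrices of the `Gᵢ`, and
selecting rows does not increase `γ₂`.
-/

open Matrix

section Factorization

variable {m n : Type*}

lemma sqrt_sum_mul_sq {ι : Type*} (s : Finset ι) (c : ℝ) (x : ι → ℝ) :
    √(∑ j ∈ s, (c * x j) ^ 2) = |c| * √(∑ j ∈ s, x j ^ 2) := by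
  simp_rw [mul_pow, ← Finset.mul_sum, Real.sqrt_mul (sq_nonneg c), Real.sqrt_sq_eq_abs]

lemma exists_mul_eq_row_le_one_of_le {ι : Type*} [Fintype ι] {A : Matrix m n ℝ}
    {U : Matrix m ι ℝ} {V : Matrix ι n ℝ} (hA : A = U * V) {a b : ℝ} (ha : 0 < a)
    (hU : ∀ i, √(∑ j, U i j ^ 2) ≤ a) (hV : ∀ p, √(∑ j, V j p ^ 2) ≤ b) :
    ∃ (U' : Matrix m ι ℝ) (V' : Matrix ι n ℝ), A = U' * V' ∧
      (∀ i, √(∑ j, U' i j ^ 2) ≤ 1) ∧ ∀ p, √(∑ j, V' j p ^ 2) ≤ a * b := by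
  refine ⟨a⁻¹ • U, a • V, ?_, fun i => ?_, fun p => ?_⟩
  · rw [Matrix.smul_mul, Matrix.mul_smul, smul_smul, inv_mul_cancel₀ ha.ne', one_smul, hA]
  · simp only [Matrix.smul_apply, smul_eq_mul, sqrt_sum_mul_sq, abs_inv, abs_of_pos ha]
    rw [inv_mul_le_iff₀ ha, mul_one]
    exact hU i
  · simp only [Matrix.smul_apply, smul_eq_mul, sqrt_sum_mul_sq, abs_of_pos ha]
    exact mul_le_mul_of_nonneg_left (hV p) ha.le

variable [Fintype m] [Fintype n]

lemma rowMax_nonneg {r : ℕ} (U : Matrix m (Fin r) ℝ) : 0 ≤ rowMax U :=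
  Real.iSup_nonneg fun _ => Real.sqrt_nonneg _

lemma colMax_nonneg {r : ℕ} (V : Matrix (Fin r) n ℝ) : 0 ≤ colMax V :=
  Real.iSup_nonneg fun _ => Real.sqrt_nonneg _

lemma sqrt_sum_sq_row_le_rowMax {r : ℕ} (U : Matrix m (Fin r) ℝ) (i : m) :
    √(∑ j, U i j ^ 2) ≤ rowMax U :=
  le_ciSup (f := fun i => √(∑ j, U i j ^ 2)) (Set.finite_range _).bddAbove i

lemma sqrt_sum_sq_col_le_colMax {r : ℕ} (V : Matrix (Fin r) n ℝ) (p : n) :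
    √(∑ j, V j p ^ 2) ≤ colMax V :=
  le_ciSup (f := fun p => √(∑ j, V j p ^ 2)) (Set.finite_range _).bddAbove p

lemma gamma2_nonneg (A : Matrix m n ℝ) : 0 ≤ gamma2 A :=
  Real.sInf_nonneg fun _ ⟨_, U, V, _, ht⟩ => ht ▸ mul_nonneg (rowMax_nonneg U) (colMax_nonneg V)

lemma gamma2_le_of_mul_eq {ι : Type*} [Fintype ι] {A : Matrix m n ℝ} {U : Matrix m ι ℝ}
    {V : Matrix ι n ℝ} (hA : A = U * V) {a b : ℝ} (ha : 0 ≤ a) (hb : 0 ≤ b)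
    (hU : ∀ i, √(∑ j, U i j ^ 2) ≤ a) (hV : ∀ p, √(∑ j, V j p ^ 2) ≤ b) :
    gamma2 A ≤ a * b := by
  set e := Fintype.equivFin ι
  have hfac : A = U.submatrix id e.symm * V.submatrix e.symm id := by
    rw [← submatrix_mul _ _ _ _ _ e.symm.bijective, submatrix_id_id, hA]
  have hrow : rowMax (U.submatrix id e.symm) ≤ a :=
    Real.iSup_le (fun i => by simpa [e.symm.sum_comp fun j => U i j ^ 2] using hU i) ha
  have hcol : colMax (V.submatrix e.symm id) ≤ b :=
    Real.iSup_le (fun p => by simpa [e.symm.sum_comp fun j => V j p ^ 2] using hV p) hb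
  calc gamma2 A ≤ rowMax (U.submatrix id e.symm) * colMax (V.submatrix e.symm id) :=
        csInf_le ⟨0, fun _ ⟨_, U, V, _, ht⟩ => ht ▸ mul_nonneg (rowMax_nonneg U) (colMax_nonneg V)⟩
          ⟨_, _, _, hfac, rfl⟩
    _ ≤ a * b := mul_le_mul hrow hcol (colMax_nonneg _) ha

lemma gamma2_factorizations_nonempty (A : Matrix m n ℝ) :
    {t : ℝ | ∃ (r : ℕ) (U : Matrix m (Fin r) ℝ) (V : Matrix (Fin r) n ℝ),
      A = U * V ∧ t = rowMax U * colMax V}.Nonempty := by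
  classical
  set e := Fintype.equivFin n
  refine ⟨_, _, A.submatrix id e.symm, (1 : Matrix n n ℝ).submatrix e.symm id, ?_, rfl⟩
  rw [← submatrix_mul _ _ _ _ _ e.symm.bijective, Matrix.mul_one, submatrix_id_id]

lemma exists_mul_eq_of_gamma2_lt (A : Matrix m n ℝ) {c : ℝ} (hc : gamma2 A < c) :
    ∃ (r : ℕ) (U : Matrix m (Fin r) ℝ) (V : Matrix (Fin r) n ℝ), A = U * V ∧
      (∀ i, √(∑ j, U i j ^ 2) ≤ 1) ∧ ∀ p, √(∑ j, V j p ^ 2) ≤ c := by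
  obtain ⟨_, ⟨r, U, V, hA, rfl⟩, hlt⟩ := exists_lt_of_csInf_lt (gamma2_factorizations_nonempty A) hc
  set u := rowMax U
  set v := colMax V
  -- any `a ≥ u` with `a * v ≤ c` would do; this one is positive even when `u = 0`
  set a := u + (c - u * v) / (v + 1)
  have hv := colMax_nonneg V
  have hslack : 0 < (c - u * v) / (v + 1) := div_pos (sub_pos.mpr hlt) (by positivity)
  have hua : u ≤ a := le_add_of_nonneg_right hslack.le
  have hav : a * v ≤ c := by
    have : (c - u * v) / (v + 1) * v ≤ c - u * v := by
      rw [div_mul_eq_mul_div, div_le_iff₀ (by positivity)]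
      nlinarith [sub_pos.mpr hlt]
    nlinarith
  obtain ⟨U', V', hA', hU', hV'⟩ := exists_mul_eq_row_le_one_of_le hA
    (add_pos_of_nonneg_of_pos (rowMax_nonneg U) hslack)
    (fun i => (sqrt_sum_sq_row_le_rowMax U i).trans hua) (sqrt_sum_sq_col_le_colMax V)
  exact ⟨r, U', V', hA', hU', fun p => (hV' p).trans hav⟩

lemma gamma2_submatrix_le {m' : Type*} [Fintype m'] (A : Matrix m n ℝ) (f : m' → m) :
    gamma2 (A.submatrix f id) ≤ gamma2 A := by
  refine le_csInf (gamma2_factorizations_nonempty A) ?_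
  rintro _ ⟨r, U, V, rfl, rfl⟩
  exact gamma2_le_of_mul_eq (submatrix_mul _ _ _ _ _ Function.bijective_id)
    (rowMax_nonneg U) (colMax_nonneg V)
    (fun i => sqrt_sum_sq_row_le_rowMax U (f i)) (sqrt_sum_sq_col_le_colMax V)

end Factorization

section Stacking

variable {κ R : Type*} {m : κ → Type*} {n : Type*}

def stackRows (A : ∀ i, Matrix (m i) n R) : Matrix (Σ i, m i) n R :=
  of fun x => A x.1 x.2

variable [Fintype κ] [DecidableEq κ] {ι : κ → Type*} [∀ i, Fintype (ι i)]

lemma blockDiagonal'_mul_stackRows [NonUnitalNonAssocSemiring R] (U : ∀ i, Matrix (m i) (ι i) R)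
    (V : ∀ i, Matrix (ι i) n R) :
    blockDiagonal' U * stackRows V = stackRows fun i => U i * V i := by
  ext ⟨i, r⟩ p
  simp only [mul_apply, stackRows, of_apply, Fintype.sum_sigma]
  rw [Finset.sum_eq_single i (fun i' _ h => by simp [blockDiagonal'_apply_ne _ _ _ h.symm])
    (by simp)]
  simp

lemma sum_sq_blockDiagonal'_row [Semiring R] (U : ∀ i, Matrix (m i) (ι i) R) (i : κ)
    (r : m i) : ∑ x, blockDiagonal' U ⟨i, r⟩ x ^ 2 = ∑ j, U i r j ^ 2 := by
  rw [Fintype.sum_sigma, Finset.sum_eq_single i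
    (fun i' _ h => by simp [blockDiagonal'_apply_ne _ _ _ h.symm]) (by simp)]
  simp

end Stacking

section Gamma2Stacking

variable {κ : Type*} [Fintype κ] {m : κ → Type*} [∀ i, Fintype (m i)] {n : Type*} [Fintype n]

lemma gamma2_stackRows_le_of_lt (A : ∀ i, Matrix (m i) n ℝ) {c : κ → ℝ}
    (hc : ∀ i, gamma2 (A i) < c i) : gamma2 (stackRows A) ≤ √(∑ i, c i ^ 2) := by
  classical
  choose r U V hA hU hV using fun i => exists_mul_eq_of_gamma2_lt (A i) (hc i)
  have hc0 : ∀ i, 0 ≤ c i := fun i => (gamma2_nonneg _).trans (hc i).le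
  have hfac : stackRows A = blockDiagonal' U * stackRows V := by
    rw [blockDiagonal'_mul_stackRows]
    exact congrArg stackRows (funext hA)
  have hcol : ∀ p, √(∑ x, stackRows V x p ^ 2) ≤ √(∑ i, c i ^ 2) := fun p =>
    Real.sqrt_le_sqrt <| by
      rw [Fintype.sum_sigma]
      exact Finset.sum_le_sum fun i _ => (Real.sqrt_le_left (hc0 i)).mp (hV i p)
  simpa only [one_mul] using gamma2_le_of_mul_eq hfac zero_le_one (Real.sqrt_nonneg _)
    (fun ⟨i, x⟩ => by rw [sum_sq_blockDiagonal'_row]; exact hU i x) hcol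

lemma gamma2_stackRows_le (A : ∀ i, Matrix (m i) n ℝ) :
    gamma2 (stackRows A) ≤ √(∑ i, gamma2 (A i) ^ 2) := by
  have hcont : Filter.Tendsto (fun δ : ℝ => √(∑ i, (gamma2 (A i) + δ) ^ 2))
      (nhdsWithin 0 (Set.Ioi 0)) (nhds √(∑ i, gamma2 (A i) ^ 2)) := by
    have : Continuous fun δ : ℝ => √(∑ i, (gamma2 (A i) + δ) ^ 2) := by fun_prop
    simpa using (this.tendsto 0).mono_left nhdsWithin_le_nhds
  exact ge_of_tendsto hcont <| eventually_mem_nhdsWithin.mono fun δ hδ =>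
    gamma2_stackRows_le_of_lt A fun i => lt_add_of_pos_right _ hδ

end Gamma2Stacking

/-- If a set system `F` is the union `F = F₁ ∪ ⋯ ∪ F_k` of set systems over the same ground
set, then `γ₂(F) ≤ sqrt (γ₂(F₁)² + ⋯ + γ₂(F_k)²)`. -/
theorem gamma2_union_le {α : Type*} [Fintype α] [DecidableEq α] {k : ℕ}
    (G : Fin k → Finset (Finset α)) (F : Finset (Finset α))
    (hF : F = Finset.univ.biUnion G) :
    gamma2Sys F ≤ Real.sqrt (∑ i, (gamma2Sys (G i)) ^ 2) := by
  have hcover : ∀ S : {S // S ∈ F}, ∃ i, S.1 ∈ G i := fun S => by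
    simpa [hF] using S.2
  choose i hi using hcover
  have hrows : incidenceMatrix F =
      (stackRows fun i => incidenceMatrix (G i)).submatrix (fun S => ⟨i S, S.1, hi S⟩) id := by
    ext S p
    simp [incidenceMatrix, stackRows]
  rw [gamma2Sys, hrows]
  exact (gamma2_submatrix_le _ _).trans (gamma2_stackRows_le _)
end

section
/- Let B be a convex body in ℝ^d with centroid/reference point c, and r > 0 with c + rD^d ⊆ B. For 0 < ε < 1 and n ≥ d/(2r), the set S = c + ((B−c) \ (1−ε)(B−c)) satisfies λ_d(S + (1/(2n))D^d) ≤ ((1 + 1/(2rn))^d − (1 − ε − 1/(2rn))^d)·λ_d(B) ≤ (εd + 3d/(2rn))·λ_d(B). -/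
open scoped BigOperators ENNReal Pointwise
open MeasureTheory

/-- The closed unit Euclidean ball `D^d` in `ℝ^d` (as the pi type `Fin d → ℝ`). -/
def euclBall (d : ℕ) : Set (Fin d → ℝ) := {x | ∑ i, (x i) ^ 2 ≤ 1}

lemma aux_pow (d : ℕ) (x : ℝ) (hx : 0 ≤ x) (h : (d:ℝ) * x ≤ 1) :
    (1 + x) ^ d ≤ 1 + (d:ℝ) * x + ((d:ℝ) * x) ^ 2 := by
  induction d with
  | zero => simp
  | succ k ih =>
    have hc : (0:ℝ) ≤ (k:ℝ) := Nat.cast_nonneg k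
    have hk : (k:ℝ) * x ≤ 1 := by push_cast at h; nlinarith
    have ih' := ih hk
    push_cast at h ⊢
    have h1x : (0:ℝ) ≤ 1 + x := by linarith
    have hpow : (1 + x) ^ (k+1) = (1 + x) ^ k * (1 + x) := pow_succ _ _
    nlinarith [mul_le_mul_of_nonneg_right ih' h1x, pow_nonneg h1x k,
      mul_le_mul_of_nonneg_right hk (by positivity : (0:ℝ) ≤ (k:ℝ) * x ^ 2)]

lemma smul_subset_smul_of_convex {d : ℕ} {A : Set (Fin d → ℝ)} (hA : Convex ℝ A)
    (h0 : (0: Fin d → ℝ) ∈ A) {s t : ℝ} (hs : 0 ≤ s) (hst : s ≤ t) : s • A ⊆ t • A := by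
  rcases eq_or_lt_of_le (hs.trans hst) with h | ht
  · have hs0 : s = 0 := le_antisymm (hst.trans h.symm.le) hs
    rw [hs0, ← h]
  rintro _ ⟨a, ha, rfl⟩
  have hst1 : s / t ≤ 1 := div_le_one_of_le₀ hst ht.le
  have hmem : (s/t) • a + (1 - s/t) • (0 : Fin d → ℝ) ∈ A :=
    hA ha h0 (div_nonneg hs ht.le) (by linarith) (by ring)
  refine ⟨(s/t) • a, by simpa using hmem, ?_⟩
  show t • ((s/t) • a) = s • a
  rw [smul_smul]; congr 1; field_simp

/-- For a convex body `B` with `c + r·D^d ⊆ B`, `0 < ε < 1`, `n ≥ d/(2r)`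
(and `1 − ε − 1/(2rn) ≥ 0`), the annulus `S = c + ((B−c) \ (1−ε)(B−c))` satisfies
`λ_d(S + (1/(2n))D^d) ≤ ((1 + 1/(2rn))^d − (1 − ε − 1/(2rn))^d)·λ_d(B)
  ≤ (εd + 3d/(2rn))·λ_d(B)`. -/
theorem volume_annulus_plus_ball_le {d : ℕ} (hd : 0 < d) (B : Set (Fin d → ℝ))
    (hconv : Convex ℝ B) (hcomp : IsCompact B)
    (c : Fin d → ℝ) (r : ℝ) (hr : 0 < r)
    (hball : (fun y => c + y) '' (r • euclBall d) ⊆ B)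
    (ε : ℝ) (hε0 : 0 < ε) (hε1 : ε < 1)
    (n : ℕ) (hn : (d : ℝ) / (2 * r) ≤ n)
    (hpos : 0 ≤ 1 - ε - 1 / (2 * r * n)) :
    volume (((fun y => c + y) ''
          (((fun y => y - c) '' B) \ ((1 - ε) • ((fun y => y - c) '' B)))) +
        (1 / (2 * (n : ℝ))) • euclBall d) ≤
      ENNReal.ofReal ((1 + 1 / (2 * r * n)) ^ d - (1 - ε - 1 / (2 * r * n)) ^ d) *
        volume B ∧
    ENNReal.ofReal ((1 + 1 / (2 * r * n)) ^ d - (1 - ε - 1 / (2 * r * n)) ^ d) * volume B ≤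
      ENNReal.ofReal (ε * d + 3 * d / (2 * r * n)) * volume B := by
  -- basic positivity
  have hn0 : (0:ℝ) < n := lt_of_lt_of_le (by positivity) hn
  have h2rn : (0:ℝ) < 2 * r * n := by positivity
  set δ : ℝ := 1 / (2 * r * n) with hδ
  have hδ0 : 0 < δ := by positivity
  set A : Set (Fin d → ℝ) := (fun y => y - c) '' B with hA
  -- A as translate of B
  have hAvadd : A = (-c) +ᵥ B := by
    ext y
    constructor
    · rintro ⟨b, hb, rfl⟩
      exact ⟨b, hb, by simp only [vadd_eq_add]; abel⟩
    · rintro ⟨b, hb, rfl⟩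
      exact ⟨b, hb, by simp only [vadd_eq_add]; abel⟩
  have hvolA : volume A = volume B := by rw [hAvadd, measure_vadd]
  have hconvA : Convex ℝ A := by
    rw [hAvadd]; exact hconv.vadd _
  have hcompA : IsCompact A := hcomp.image (continuous_id.sub continuous_const)
  have hcB : c ∈ B := by
    refine hball ⟨r • 0, ⟨0, ?_, rfl⟩, by simp⟩
    simp [euclBall]
  have h0A : (0 : Fin d → ℝ) ∈ A := ⟨c, hcB, sub_self c⟩
  have hrD : r • euclBall d ⊆ A := by
    rintro _ ⟨y, hy, rfl⟩
    exact ⟨c + r • y, hball ⟨r • y, ⟨y, hy, rfl⟩, rfl⟩, add_sub_cancel_left c _⟩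
  -- small ball inside δ • A
  have hsmall : (1 / (2 * (n:ℝ))) • euclBall d ⊆ δ • A := by
    rintro _ ⟨y, hy, rfl⟩
    refine ⟨r • y, hrD ⟨y, hy, rfl⟩, ?_⟩
    show δ • r • y = (1 / (2 * (n:ℝ))) • y
    rw [smul_smul]; congr 1; rw [hδ]; field_simp
  -- symmetry of the small ball
  have hsymm : ∀ u ∈ (1 / (2 * (n:ℝ))) • euclBall d, -u ∈ (1 / (2 * (n:ℝ))) • euclBall d := by
    rintro _ ⟨y, hy, rfl⟩
    refine ⟨-y, ?_, by simp⟩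
    simpa [euclBall] using hy
  -- key inclusion
  have hsum1 : (1 + δ) • A = A + δ • A := by
    rw [hconvA.add_smul zero_le_one hδ0.le, one_smul]
  have hsum2 : (1 - ε) • A = (1 - ε - δ) • A + δ • A := by
    rw [← hconvA.add_smul hpos hδ0.le]; norm_num
  have hincl : (A \ (1 - ε) • A) + (1 / (2 * (n:ℝ))) • euclBall d ⊆
      ((1 + δ) • A) \ ((1 - ε - δ) • A) := by
    rintro z ⟨x, hx, u, hu, rfl⟩
    constructor
    · rw [hsum1]
      exact Set.add_mem_add hx.1 (hsmall hu)
    · intro hmem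
      apply hx.2
      have : x + u + -u ∈ (1 - ε) • A := by
        rw [hsum2]
        exact Set.add_mem_add hmem (hsmall (hsymm u hu))
      simpa using this
  -- translate the LHS
  have htrans : ((fun y => c + y) '' (A \ (1 - ε) • A)) + (1 / (2 * (n:ℝ))) • euclBall d
      = c +ᵥ ((A \ (1 - ε) • A) + (1 / (2 * (n:ℝ))) • euclBall d) := by
    ext z
    constructor
    · rintro ⟨_, ⟨x, hx, rfl⟩, u, hu, rfl⟩
      exact ⟨x + u, Set.add_mem_add hx hu, by simp only [vadd_eq_add]; abel⟩
    · rintro ⟨_, ⟨x, hx, u, hu, rfl⟩, rfl⟩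
      exact ⟨c + x, ⟨x, hx, rfl⟩, u, hu, by simp only [vadd_eq_add]; abel⟩
  have hfinrank : Module.finrank ℝ (Fin d → ℝ) = d := Module.finrank_fin_fun ℝ
  have hscale : ∀ t : ℝ, 0 ≤ t → volume (t • A) = ENNReal.ofReal (t ^ d) * volume B := by
    intro t ht
    rw [Measure.addHaar_smul, hfinrank, abs_of_nonneg (pow_nonneg ht d), hvolA]
  have hsub : (1 - ε - δ) • A ⊆ (1 + δ) • A :=
    smul_subset_smul_of_convex hconvA h0A hpos (by linarith)
  have hεδ : 0 ≤ 1 - ε - δ := hpos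
  have hmeas2 : NullMeasurableSet ((1 - ε - δ) • A) volume :=
    ((hcompA.smul (1 - ε - δ)).isClosed.measurableSet).nullMeasurableSet
  have hfin2 : volume ((1 - ε - δ) • A) ≠ ⊤ := by
    rw [hscale _ hεδ]
    exact ENNReal.mul_ne_top ENNReal.ofReal_ne_top hcomp.measure_ne_top
  have hvolB : volume B ≠ ⊤ := hcomp.measure_ne_top
  have hpowle : (1 - ε - δ) ^ d ≤ (1 + δ) ^ d :=
    pow_le_pow_left₀ hεδ (by linarith) d
  constructor
  · calc volume (((fun y => c + y) '' (A \ (1 - ε) • A)) + (1 / (2 * (n:ℝ))) • euclBall d)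
        = volume ((A \ (1 - ε) • A) + (1 / (2 * (n:ℝ))) • euclBall d) := by
          rw [htrans, measure_vadd]
      _ ≤ volume (((1 + δ) • A) \ ((1 - ε - δ) • A)) := measure_mono hincl
      _ = volume ((1 + δ) • A) - volume ((1 - ε - δ) • A) := measure_diff hsub hmeas2 hfin2
      _ = ENNReal.ofReal ((1 + δ) ^ d) * volume B
          - ENNReal.ofReal ((1 - ε - δ) ^ d) * volume B := by
          rw [hscale _ (by linarith), hscale _ hεδ]
      _ ≤ ENNReal.ofReal ((1 + δ) ^ d - (1 - ε - δ) ^ d) * volume B := by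
          rw [tsub_le_iff_right, ← add_mul, ← ENNReal.ofReal_add (by linarith)
            (pow_nonneg hεδ d), sub_add_cancel]
  · refine mul_le_mul_left (ENNReal.ofReal_le_ofReal ?_) _
    -- real inequality
    have hdδ : (d:ℝ) * δ ≤ 1 := by
      rw [div_le_iff₀ (by positivity : (0:ℝ) < 2*r)] at hn
      rw [hδ, mul_one_div, div_le_one h2rn]
      nlinarith
    have h1 : (1 + δ) ^ d ≤ 1 + (d:ℝ) * δ + ((d:ℝ) * δ) ^ 2 := aux_pow d δ hδ0.le hdδ
    have h2 : 1 - (d:ℝ) * (ε + δ) ≤ (1 - ε - δ) ^ d := by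
      have := one_add_mul_le_pow (a := -(ε + δ)) (by linarith) d
      calc 1 - (d:ℝ) * (ε + δ) = 1 + (d:ℝ) * (-(ε+δ)) := by ring
        _ ≤ (1 + -(ε + δ)) ^ d := this
        _ = (1 - ε - δ) ^ d := by ring_nf
    have hdδ2 : ((d:ℝ) * δ) ^ 2 ≤ (d:ℝ) * δ := by nlinarith [mul_nonneg (Nat.cast_nonneg (α := ℝ) d) hδ0.le]
    have h3dδ : 3 * (d:ℝ) / (2 * r * n) = 3 * ((d:ℝ) * δ) := by rw [hδ]; field_simp
    rw [h3dδ]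
    nlinarith
end
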